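/- arXiv:2109.13537 — 3 statements merged into one kernel-verified Lean document; each statement's English description precedes it below -/
import Mathlib

section
/- Let {Ui}_{i=1}^{n1} be a set of d1×d1 unitary matrices and {Vj}_{j=1}^{n2} a set of d2×d2 unitary matrices such that no d1×d1 unitary matrix is Hilbert–Schmidt orthogonal to all Ui, and no d2×d2 unitary matrix is Hilbert–Schmidt orthogonal to all Vj. Then there is no product unitary matrix U⊗V (U a d1×d1 unitary, V a d2×d2 unitary) that is Hilbert–Schmidt orthogonal to all Ui⊗Vj. -/
open Matrix Kronecker

theorem trace_conjTranspose_kronecker_mul_kronecker {m n α : Type*} [Fintype m] [Fintype n]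
    [CommSemiring α] [StarRing α] (A C : Matrix m m α) (B D : Matrix n n α) :
    ((A ⊗ₖ B)ᴴ * (C ⊗ₖ D)).trace = (Aᴴ * C).trace * (Bᴴ * D).trace := by
  rw [conjTranspose_kronecker, ← mul_kronecker_mul, trace_kronecker]

theorem forall_eq_zero_or_forall_eq_zero_of_mul_eq_zero {ι κ M₀ : Type*} [MulZeroClass M₀]
    [NoZeroDivisors M₀] {a : ι → M₀} {b : κ → M₀} (h : ∀ i j, a i * b j = 0) :
    (∀ i, a i = 0) ∨ ∀ j, b j = 0 := by
  by_contra! ⟨⟨i, hi⟩, ⟨j, hj⟩⟩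
  exact mul_ne_zero hi hj (h i j)

theorem tensor_of_UUO_sets_is_UPUOB_general (d1 d2 n1 n2 : ℕ)
    (U : Fin n1 → Matrix (Fin d1) (Fin d1) ℂ)
    (V : Fin n2 → Matrix (Fin d2) (Fin d2) ℂ)
    (hUUO₁ : ¬ ∃ W ∈ Matrix.unitaryGroup (Fin d1) ℂ, ∀ i, (Wᴴ * U i).trace = 0)
    (hUUO₂ : ¬ ∃ X ∈ Matrix.unitaryGroup (Fin d2) ℂ, ∀ j, (Xᴴ * V j).trace = 0) :
    ¬ ∃ W ∈ Matrix.unitaryGroup (Fin d1) ℂ, ∃ X ∈ Matrix.unitaryGroup (Fin d2) ℂ,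
      ∀ i j, ((W ⊗ₖ X)ᴴ * (U i ⊗ₖ V j)).trace = 0 := by
  rintro ⟨W, hW, X, hX, h⟩
  have hprod : ∀ i j, (Wᴴ * U i).trace * (Xᴴ * V j).trace = 0 := fun i j => by
    rw [← trace_conjTranspose_kronecker_mul_kronecker]
    exact h i j
  rcases forall_eq_zero_or_forall_eq_zero_of_mul_eq_zero hprod with hW₀ | hX₀
  · exact hUUO₁ ⟨W, hW, hW₀⟩
  · exact hUUO₂ ⟨X, hX, hX₀⟩

theorem tensor_of_UUO_sets_is_UPUOB (d1 d2 n1 n2 : ℕ)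
    (U : Fin n1 → Matrix (Fin d1) (Fin d1) ℂ)
    (V : Fin n2 → Matrix (Fin d2) (Fin d2) ℂ)
    (hU : ∀ i, U i ∈ Matrix.unitaryGroup (Fin d1) ℂ)
    (hV : ∀ j, V j ∈ Matrix.unitaryGroup (Fin d2) ℂ)
    (hUUO₁ : ¬ ∃ W ∈ Matrix.unitaryGroup (Fin d1) ℂ, ∀ i, (Wᴴ * U i).trace = 0)
    (hUUO₂ : ¬ ∃ X ∈ Matrix.unitaryGroup (Fin d2) ℂ, ∀ j, (Xᴴ * V j).trace = 0) :
    ¬ ∃ W ∈ Matrix.unitaryGroup (Fin d1) ℂ, ∃ X ∈ Matrix.unitaryGroup (Fin d2) ℂ,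
      ∀ i j, ((W ⊗ₖ X)ᴴ * (U i ⊗ₖ V j)).trace = 0 :=
  tensor_of_UUO_sets_is_UPUOB_general d1 d2 n1 n2 U V hUUO₁ hUUO₂
end

section
/- Let S = {⊗_{i=1}^m U_{i,j} : j = 1,...,n} be a finite set of m-partite product matrices, with U_{i,j} in the space of d_i×d_i matrices. Then there exists a nonzero product matrix W = ⊗_{i=1}^m W_i Hilbert–Schmidt orthogonal to every element of S if and only if there exists a partition of {1,...,n} into disjoint sets T_1,...,T_m such that for each i, the span of {U_{i,j} : j ∈ T_i} has dimension strictly less than d_i². -/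
/-!
The trace of a tensor product of matrices is the product of the traces, so `⊗ W_i` is
orthogonal to `⊗ U_{i,j}` exactly when some factor `Tr (W_iᴴ U_{i,j})` vanishes; recording one
such `i` for every `j` is the partition. Conversely, for a fixed block `T_i`, the trace pairing
`(A, M) ↦ Tr (A M)` is nondegenerate, so a nonzero `W_i` orthogonal to `{U_{i,j} : j ∈ T_i}`
exists iff the annihilator of their span is nonzero, i.e. iff the span is a proper subspace.
-/

open Matrix Module

theorem exists_pi_forall_exists_iff_exists_assignment {ι κ : Type*} {α : ι → Type*}
    (P : ∀ i, α i → Prop) (Q : ∀ i, κ → α i → Prop) :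
    (∃ w : ∀ i, α i, (∀ i, P i (w i)) ∧ ∀ j, ∃ i, Q i j (w i)) ↔
      ∃ T : κ → ι, ∀ i, ∃ w, P i w ∧ ∀ j, T j = i → Q i j w := by
  constructor
  · rintro ⟨w, hP, hQ⟩
    choose T hT using hQ
    exact ⟨T, fun i => ⟨w i, hP i, fun j hj => hj ▸ hT j⟩⟩
  · rintro ⟨T, hT⟩
    choose w hP hQ using hT
    exact ⟨w, hP, fun j => ⟨T j, hQ (T j) j rfl⟩⟩

namespace LinearMap.BilinForm

variable {K V : Type*} [Field K] [AddCommGroup V] [Module K V] [FiniteDimensional K V]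

theorem exists_ne_zero_forall_apply_eq_zero_iff {B : LinearMap.BilinForm K V}
    (hB : B.Nondegenerate) (S : Set V) :
    (∃ w ≠ 0, ∀ s ∈ S, B w s = 0) ↔ Submodule.span K S ≠ ⊤ := by
  rw [ne_eq, ← Submodule.dualAnnihilator_eq_bot_iff, ← ne_eq, Submodule.ne_bot_iff,
    ← (B.toDual hB).exists_congr_right]
  refine exists_congr fun w => ?_
  rw [← SetLike.mem_coe, Submodule.coe_dualAnnihilator_span]
  simp [Set.subset_def, toDual_def, and_comm]

end LinearMap.BilinForm

namespace Matrix

variable (n K : Type*) [Fintype n] [Field K]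

noncomputable def traceForm : LinearMap.BilinForm K (Matrix n n K) :=
  (LinearMap.mul K (Matrix n n K)).compr₂ (traceLinearMap n K K)

variable {n K}

@[simp]
theorem traceForm_apply (A B : Matrix n n K) : traceForm n K A B = (A * B).trace := rfl

theorem traceForm_nondegenerate : (traceForm n K).Nondegenerate :=
  ⟨fun A hA => ext_iff_trace_mul_right.mpr fun M => by simpa using hA M,
    fun A hA => ext_iff_trace_mul_left.mpr fun M => by simpa using hA M⟩

theorem exists_ne_zero_forall_trace_conjTranspose_mul_eq_zero_iff [StarRing K]
    (S : Set (Matrix n n K)) :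
    (∃ W ≠ 0, ∀ M ∈ S, (Wᴴ * M).trace = 0) ↔
      finrank K (Submodule.span K S) < Fintype.card n ^ 2 := by
  have hconj : (∃ W ≠ 0, ∀ M ∈ S, (Wᴴ * M).trace = 0) ↔
      ∃ A ≠ 0, ∀ M ∈ S, traceForm n K A M = 0 :=
    (conjTransposeAddEquiv n n K).exists_congr fun W => by simp
  have hfinrank : finrank K (Matrix n n K) = Fintype.card n ^ 2 := by
    rw [finrank_matrix, finrank_self, mul_one, sq]
  rw [hconj, LinearMap.BilinForm.exists_ne_zero_forall_apply_eq_zero_iff traceForm_nondegenerate,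
    ← hfinrank]
  exact ⟨Submodule.finrank_lt, fun h htop => h.ne (by rw [htop, finrank_top])⟩

end Matrix

theorem extendible_iff_partition (m n : ℕ) (d : Fin m → ℕ)
    (U : (i : Fin m) → Fin n → Matrix (Fin (d i)) (Fin (d i)) ℂ) :
    (∃ W : (i : Fin m) → Matrix (Fin (d i)) (Fin (d i)) ℂ,
        (∀ i, W i ≠ 0) ∧ ∀ j, (∏ i, ((W i)ᴴ * U i j).trace) = 0) ↔
    (∃ T : Fin n → Fin m, ∀ i,
        Module.finrank ℂ (Submodule.span ℂ {M | ∃ j, T j = i ∧ U i j = M}) < (d i) ^ 2) := by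
  simp only [Finset.prod_eq_zero_iff, Finset.mem_univ, true_and]
  refine (exists_pi_forall_exists_iff_exists_assignment (fun i (W : Matrix (Fin (d i)) _ ℂ) =>
    W ≠ 0) fun i j W => (Wᴴ * U i j).trace = 0).trans ?_
  refine exists_congr fun T => forall_congr' fun i => ?_
  simpa using exists_ne_zero_forall_trace_conjTranspose_mul_eq_zero_iff
    {M | ∃ j, T j = i ∧ U i j = M}
end

section
/- Let U1,...,U12 be the two-qubit product matrices: U1 = (1/√2)σx⊗(σx−σy), U2 = (1/√2)(σx−σy)⊗σz, U3 = (1/√2)σz⊗(−σy+σz), U4 = (1/√2)(−σy+σz)⊗σx, U5 = (1/3)(σx+σy+σz)⊗(σx+σy+σz), U6,...,U12 = I⊗I, I⊗σx, I⊗σy, I⊗σz, σx⊗I, σy⊗I, σz⊗I. If a product matrix W⊗X (W, X complex 2×2 matrices) satisfies Tr((W⊗X)†Ui) = 0 for all i = 1,...,12, then W = 0 or X = 0. -/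
/-!
Write `a, b ∈ ℂ³` for the Pauli coefficients `Tr(W† σₖ)`, `Tr(X† σₖ)` and `a₀ = Tr W†`,
`b₀ = Tr X†`. Since the trace pairing is multiplicative on Kronecker products, `U₁, …, U₅` say
`(uᵢ ⬝ a) (vᵢ ⬝ b) = 0`, where `uᵢ ⊗ vᵢ` are the five vectors of the Tiles unextendible product
basis of `ℂ³ ⊗ ℂ³`. Any three of the `uᵢ`, and any three of the `vᵢ`, span `ℂ³`; as each of the
five equations kills a factor on one side, one side gets three, so `a = 0` or `b = 0`.
The remaining seven operators say `a₀ b₀ = a₀ b = a b₀ = 0`, which forces `(a₀, a) = 0` or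
`(b₀, b) = 0`, i.e. `W = 0` or `X = 0` since `I, σx, σy, σz` is a basis.
-/

open Matrix Kronecker

noncomputable section

def σx : Matrix (Fin 2) (Fin 2) ℂ := !![0, 1; 1, 0]
def σy : Matrix (Fin 2) (Fin 2) ℂ := !![0, -Complex.I; Complex.I, 0]
def σz : Matrix (Fin 2) (Fin 2) ℂ := !![1, 0; 0, -1]

def U2 : Fin 12 → Matrix (Fin 2 × Fin 2) (Fin 2 × Fin 2) ℂ :=
  ![(1 / Real.sqrt 2 : ℂ) • (σx ⊗ₖ (σx - σy)),
    (1 / Real.sqrt 2 : ℂ) • ((σx - σy) ⊗ₖ σz),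
    (1 / Real.sqrt 2 : ℂ) • (σz ⊗ₖ (-σy + σz)),
    (1 / Real.sqrt 2 : ℂ) • ((-σy + σz) ⊗ₖ σx),
    (1 / 3 : ℂ) • ((σx + σy + σz) ⊗ₖ (σx + σy + σz)),
    (1 : Matrix (Fin 2) (Fin 2) ℂ) ⊗ₖ 1, 1 ⊗ₖ σx, 1 ⊗ₖ σy, 1 ⊗ₖ σz,
    σx ⊗ₖ 1, σy ⊗ₖ 1, σz ⊗ₖ 1]

theorem trace_conjTranspose_kronecker_mul {m n R : Type*} [Fintype m] [Fintype n]
    [CommSemiring R] [StarRing R] (W A : Matrix m m R) (X B : Matrix n n R) :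
    ((W ⊗ₖ X)ᴴ * (A ⊗ₖ B)).trace = (Wᴴ * A).trace * (Xᴴ * B).trace := by
  rw [conjTranspose_kronecker, ← mul_kronecker_mul, trace_kronecker]

/-- Any `k` of the vectors `u i` span: a vector annihilated by `k` of them under the
(bilinear) dot product is zero. -/
def EverySubfamilySpans {ι m R : Type*} [Fintype m] [Mul R] [AddCommMonoid R]
    (k : ℕ) (u : ι → m → R) : Prop :=
  ∀ s : Finset ι, k ≤ s.card → ∀ a : m → R, (∀ i ∈ s, u i ⬝ᵥ a = 0) → a = 0

theorem EverySubfamilySpans.comp {ι κ m R : Type*} [Fintype m] [Mul R] [AddCommMonoid R]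
    {k : ℕ} {u : ι → m → R} (hu : EverySubfamilySpans k u) {e : κ → ι}
    (he : Function.Injective e) : EverySubfamilySpans k (u ∘ e) := fun s hs a ha =>
  hu (s.map ⟨e, he⟩) (by rwa [Finset.card_map]) a (by simpa using ha)

theorem eq_zero_or_eq_zero_of_forall_dotProduct_mul_dotProduct_eq_zero
    {ι m n R : Type*} [Fintype ι] [Fintype m] [Fintype n] [NonUnitalNonAssocSemiring R]
    [NoZeroDivisors R] {u : ι → m → R} {v : ι → n → R} {k l : ℕ}
    (hu : EverySubfamilySpans k u) (hv : EverySubfamilySpans l v)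
    (hcard : k + l ≤ Fintype.card ι + 1) {a : m → R} {b : n → R}
    (h : ∀ i, (u i ⬝ᵥ a) * (v i ⬝ᵥ b) = 0) : a = 0 ∨ b = 0 := by
  classical
  set s := Finset.univ.filter fun i => u i ⬝ᵥ a = 0
  set t := Finset.univ.filter fun i => v i ⬝ᵥ b = 0
  have hst : s ∪ t = Finset.univ := by
    ext i
    simpa [s, t] using mul_eq_zero.1 (h i)
  have hcard_st : Fintype.card ι ≤ s.card + t.card := by
    rw [← Finset.card_univ, ← hst]
    exact Finset.card_union_le s t
  by_cases hk : k ≤ s.card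
  · exact .inl (hu s hk a fun i hi => (Finset.mem_filter.1 hi).2)
  · exact .inr (hv t (by omega) b fun i hi => (Finset.mem_filter.1 hi).2)

theorem and_eq_zero_or_and_eq_zero_of_mul_eq_zero {m R : Type*} [MulZeroClass R]
    [NoZeroDivisors R] {a₀ b₀ : R} {a b : m → R} (h₀₀ : a₀ * b₀ = 0)
    (h₀ : ∀ k, a₀ * b k = 0) (h₁ : ∀ k, a k * b₀ = 0) (hab : a = 0 ∨ b = 0) :
    (a₀ = 0 ∧ a = 0) ∨ (b₀ = 0 ∧ b = 0) := by
  rcases hab with rfl | rfl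
  · by_cases ha₀ : a₀ = 0
    · exact .inl ⟨ha₀, rfl⟩
    · exact .inr ⟨(mul_eq_zero.1 h₀₀).resolve_left ha₀,
        funext fun k => (mul_eq_zero.1 (h₀ k)).resolve_left ha₀⟩
  · by_cases hb₀ : b₀ = 0
    · exact .inr ⟨hb₀, rfl⟩
    · exact .inl ⟨(mul_eq_zero.1 h₀₀).resolve_right hb₀,
        funext fun k => (mul_eq_zero.1 (h₁ k)).resolve_right hb₀⟩

/-- `tilesLeft i ⊗ tilesRight i`, `i < 5`, is the Tiles unextendible product basis of `ℂ³ ⊗ ℂ³`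
(Bennett et al.). -/
def tilesLeft : Fin 5 → Fin 3 → ℂ :=
  ![![1, 0, 0], ![1, -1, 0], ![0, 0, 1], ![0, -1, 1], ![1, 1, 1]]

def tilesRight : Fin 5 → Fin 3 → ℂ := tilesLeft ∘ ![1, 2, 3, 0, 4]

theorem tilesLeft_spans : EverySubfamilySpans 3 tilesLeft := by
  intro s hs a ha
  obtain ⟨t, hts, ht⟩ := Finset.exists_subset_card_eq hs
  have ht : t ∈ (Finset.univ : Finset (Fin 5)).powersetCard 3 :=
    Finset.mem_powersetCard.2 ⟨t.subset_univ, ht⟩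
  rw [show (Finset.univ : Finset (Fin 5)).powersetCard 3 = {{0, 1, 2}, {0, 1, 3}, {0, 1, 4},
    {0, 2, 3}, {0, 2, 4}, {0, 3, 4}, {1, 2, 3}, {1, 2, 4}, {1, 3, 4}, {2, 3, 4}} by decide] at ht
  replace ha : ∀ i ∈ t, tilesLeft i ⬝ᵥ a = 0 := fun i hi => ha i (hts hi)
  simp only [Finset.mem_insert, Finset.mem_singleton] at ht
  ext j
  rcases ht with rfl | rfl | rfl | rfl | rfl | rfl | rfl | rfl | rfl | rfl <;>
    simp only [Finset.mem_insert, Finset.mem_singleton, forall_eq_or_imp, forall_eq, dotProduct,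
      Fin.sum_univ_three, tilesLeft, cons_val] at ha <;>
    fin_cases j <;> simp only [Pi.zero_apply] <;> grind

theorem tilesRight_spans : EverySubfamilySpans 3 tilesRight :=
  tilesLeft_spans.comp (by decide)

def pauli : Fin 3 → Matrix (Fin 2) (Fin 2) ℂ := ![σx, σy, σz]

def pauliCoeffs (W : Matrix (Fin 2) (Fin 2) ℂ) : Fin 3 → ℂ := fun k => (Wᴴ * pauli k).trace

theorem trace_conjTranspose_mul_sum_pauli (W : Matrix (Fin 2) (Fin 2) ℂ) (x : Fin 3 → ℂ) :
    (Wᴴ * ∑ k, x k • pauli k).trace = x ⬝ᵥ pauliCoeffs W := by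
  simp only [Matrix.mul_sum, Matrix.mul_smul, trace_sum, trace_smul, smul_eq_mul, dotProduct,
    pauliCoeffs]

theorem eq_zero_of_pauliCoeffs_eq_zero {W : Matrix (Fin 2) (Fin 2) ℂ}
    (h0 : Wᴴ.trace = 0) (h : pauliCoeffs W = 0) : W = 0 := by
  have hx : (Wᴴ * σx).trace = 0 := congrFun h 0
  have hy : (Wᴴ * σy).trace = 0 := congrFun h 1
  have hz : (Wᴴ * σz).trace = 0 := congrFun h 2
  rw [← conjTranspose_eq_zero]
  generalize Wᴴ = M at h0 hx hy hz
  simp only [trace_fin_two, σx, σy, σz, mul_apply, of_apply, cons_val', cons_val_zero,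
    cons_val_one, cons_val_fin_one, Fin.sum_univ_two, mul_zero, mul_one, zero_add, add_zero,
    mul_neg] at h0 hx hy hz
  ext i j
  fin_cases i <;> fin_cases j <;> simp only [Fin.zero_eta, Fin.mk_one, Matrix.zero_apply]
  · linear_combination (h0 + hz) / 2
  · linear_combination (hx - Complex.I * hy) / 2 + (M 0 1 - M 1 0) / 2 * Complex.I_sq
  · linear_combination (hx + Complex.I * hy) / 2 - (M 0 1 - M 1 0) / 2 * Complex.I_sq
  · linear_combination (h0 - hz) / 2

theorem U2_castLE_eq_smul_kronecker (i : Fin 5) : ∃ c : ℂ, c ≠ 0 ∧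
    U2 (Fin.castLE (by norm_num) i) =
      c • ((∑ k, tilesLeft i k • pauli k) ⊗ₖ ∑ k, tilesRight i k • pauli k) := by
  have hsqrt : (1 / Real.sqrt 2 : ℂ) ≠ 0 := by simp
  fin_cases i
  all_goals first
    | refine ⟨1 / 3, by norm_num, ?_⟩
      simp [U2, tilesLeft, tilesRight, pauli, Fin.sum_univ_three]
      done
    | refine ⟨_, hsqrt, ?_⟩
      simp [U2, tilesLeft, tilesRight, pauli, Fin.sum_univ_three, sub_eq_add_neg]

theorem U2_strongly_unextendible :
    ∀ W X : Matrix (Fin 2) (Fin 2) ℂ,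
      (∀ i : Fin 12, ((W ⊗ₖ X)ᴴ * U2 i).trace = 0) → W = 0 ∨ X = 0 := by
  intro W X h
  have hU (i A B) (hi : U2 i = A ⊗ₖ B) : (Wᴴ * A).trace * (Xᴴ * B).trace = 0 := by
    rw [← trace_conjTranspose_kronecker_mul, ← hi, h i]
  have htiles (i : Fin 5) :
      (tilesLeft i ⬝ᵥ pauliCoeffs W) * (tilesRight i ⬝ᵥ pauliCoeffs X) = 0 := by
    obtain ⟨c, hc, hi⟩ := U2_castLE_eq_smul_kronecker i
    have := h (Fin.castLE (by norm_num) i)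
    rwa [hi, Matrix.mul_smul, trace_smul, trace_conjTranspose_kronecker_mul,
      trace_conjTranspose_mul_sum_pauli, trace_conjTranspose_mul_sum_pauli, smul_eq_zero,
      or_iff_right hc] at this
  have hab := eq_zero_or_eq_zero_of_forall_dotProduct_mul_dotProduct_eq_zero tilesLeft_spans
    tilesRight_spans (by simp) htiles
  have h₀₀ : Wᴴ.trace * Xᴴ.trace = 0 := by simpa only [Matrix.mul_one] using hU 5 1 1 rfl
  have h₀ (k : Fin 3) : Wᴴ.trace * pauliCoeffs X k = 0 := by
    simpa only [Matrix.mul_one, pauliCoeffs] using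
      hU (6 + k.castLE (by norm_num)) 1 (pauli k) (by fin_cases k <;> rfl)
  have h₁ (k : Fin 3) : pauliCoeffs W k * Xᴴ.trace = 0 := by
    simpa only [Matrix.mul_one, pauliCoeffs] using
      hU (9 + k.castLE (by norm_num)) (pauli k) 1 (by fin_cases k <;> rfl)
  rcases and_eq_zero_or_and_eq_zero_of_mul_eq_zero h₀₀ h₀ h₁ hab with ⟨hW₀, hW⟩ | ⟨hX₀, hX⟩
  · exact .inl (eq_zero_of_pauliCoeffs_eq_zero hW₀ hW)
  · exact .inr (eq_zero_of_pauliCoeffs_eq_zero hX₀ hX)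

end
end
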